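/- The generalized Laguerre polynomials are orthogonal with respect to the weight w_α(x) = x^α e^{−x} on (0, ∞): for n ≠ m, ∫₀^∞ L_n^α(x) L_m^α(x) x^α e^{−x} dx = 0, and for n = m the integral equals Γ(n + α + 1)/n!. -/

import Mathlib

/-! Expanding both polynomials reduces the integral to the moments
`∫ x^k x^α e^{-x} = Γ(k+α+1)`. For `k ≤ n`, writing `Γ(j+k+α+1) = Γ(j+α+1) (j+α+1)_k`, the moment
of `x^k` against `L_n^α` becomes `Γ(n+α+1)/n!` times `∑_j (-1)^j C(n,j) (α+1+j)_k`, which is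
`(-1)^n` times the `n`-th forward difference of a monic polynomial of degree `k`: zero for `k < n`
and `(-1)^n n!` for `k = n`. Hence only the leading coefficient `(-1)^n/n!` of the factor of lower
degree survives. -/

/-- Generalized binomial coefficient C(z, m) for real z. -/
noncomputable def genBinom (z : ℝ) (m : ℕ) : ℝ :=
  (∏ i ∈ Finset.range m, (z - i)) / m.factorial

/-- Generalized Laguerre polynomial L_n^α(x) = Σ_{k=0}^n (-1)^k C(n+α, n-k) x^k / k!. -/
noncomputable def laguerre (α : ℝ) (n : ℕ) (x : ℝ) : ℝ :=
  ∑ k ∈ Finset.range (n + 1), (-1 : ℝ) ^ k * genBinom (n + α) (n - k) * x ^ k / k.factorial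

open Finset MeasureTheory Polynomial Real

theorem Real.Gamma_mul_ascPochhammer_eval {t : ℝ} (ht : ∀ k : ℕ, t ≠ -k) (d : ℕ) :
    Gamma t * (ascPochhammer ℝ d).eval t = Gamma (t + d) := by
  induction d with
  | zero => simp
  | succ d ih =>
    have htd : t + d ≠ 0 := fun h => ht d (eq_neg_of_add_eq_zero_left h)
    rw [ascPochhammer_succ_eval, ← mul_assoc, ih, Nat.cast_succ, ← add_assoc, Gamma_add_one htd,
      mul_comm]

lemma genBinom_eq_descPochhammer_eval (z : ℝ) (m : ℕ) :
    genBinom z m = (descPochhammer ℝ m).eval z / m.factorial := by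
  rw [genBinom, descPochhammer_eval_eq_prod_range]

lemma genBinom_mul_Gamma {z : ℝ} {d : ℕ} (hz : ∀ k : ℕ, z - d + 1 ≠ -k) :
    genBinom z d * Gamma (z - d + 1) = Gamma (z + 1) / d.factorial := by
  rw [genBinom_eq_descPochhammer_eval, descPochhammer_eval_eq_ascPochhammer, div_mul_eq_mul_div,
    mul_comm, Gamma_mul_ascPochhammer_eval hz]
  ring_nf

lemma sum_neg_one_pow_mul_choose_mul_ascPochhammer_eval (c : ℝ) {n k : ℕ} (hk : k ≤ n) :
    ∑ j ∈ range (n + 1), (-1 : ℝ) ^ j * n.choose j * (ascPochhammer ℝ k).eval (c + j)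
      = if k = n then (-1 : ℝ) ^ n * n.factorial else 0 := by
  have hΔ : (fwdDiff 1)^[n] (ascPochhammer ℝ k).eval c
      = if k = n then (n.factorial : ℝ) else 0 := by
    split_ifs with h
    · subst h
      simpa [ascPochhammer_natDegree, (monic_ascPochhammer ℝ k).leadingCoeff] using
        congr_fun (ascPochhammer ℝ k).fwdDiff_iter_degree_eq_factorial c
    · exact congr_fun (fwdDiff_iter_eq_zero_of_degree_lt
        (by rw [ascPochhammer_natDegree]; omega)) c
  have hsign : ∀ j ∈ range (n + 1), (-1 : ℝ) ^ j = (-1) ^ n * (-1) ^ (n - j) := fun j hj => by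
    rw [← pow_add, show n + (n - j) = j + 2 * (n - j) by grind, pow_add, pow_mul]
    simp
  calc _ = (-1) ^ n * (fwdDiff 1)^[n] (ascPochhammer ℝ k).eval c := by
        rw [fwdDiff_iter_eq_sum_shift, mul_sum]
        refine sum_congr rfl fun j hj => ?_
        rw [hsign j hj, zsmul_eq_mul]
        push_cast
        ring_nf
    _ = _ := by rw [hΔ]; split_ifs <;> simp

section Moments

variable {α : ℝ}

lemma pow_mul_rpow_mul_exp_eqOn (α : ℝ) (k : ℕ) :
    Set.EqOn (fun x : ℝ => x ^ k * x ^ α * exp (-x))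
      (fun x => exp (-x) * x ^ ((k + α + 1 : ℝ) - 1)) (Set.Ioi 0) := fun x hx => by
  simp only [add_sub_cancel_right, rpow_add (Set.mem_Ioi.mp hx), rpow_natCast]
  ring

lemma integrableOn_pow_mul_rpow_mul_exp (hα : -1 < α) (k : ℕ) :
    IntegrableOn (fun x : ℝ => x ^ k * x ^ α * exp (-x)) (Set.Ioi 0) :=
  (GammaIntegral_convergent (by linarith [k.cast_nonneg (α := ℝ)])).congr_fun
    (pow_mul_rpow_mul_exp_eqOn α k).symm measurableSet_Ioi

lemma integral_pow_mul_rpow_mul_exp (hα : -1 < α) (k : ℕ) :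
    ∫ x in Set.Ioi (0 : ℝ), x ^ k * x ^ α * exp (-x) = Gamma (k + α + 1) := by
  rw [Gamma_eq_integral (by linarith [k.cast_nonneg (α := ℝ)])]
  exact setIntegral_congr_fun measurableSet_Ioi (pow_mul_rpow_mul_exp_eqOn α k)

lemma integral_sum_pow_mul_rpow_mul_exp (hα : -1 < α) {ι : Type*} (s : Finset ι) (a : ι → ℝ)
    (e : ι → ℕ) :
    ∫ x in Set.Ioi (0 : ℝ), (∑ i ∈ s, a i * x ^ e i) * x ^ α * exp (-x)
      = ∑ i ∈ s, a i * Gamma (e i + α + 1) := by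
  simp_rw [sum_mul, mul_assoc]
  rw [integral_finsetSum _ fun i _ => by
    simpa only [mul_assoc] using (integrableOn_pow_mul_rpow_mul_exp hα (e i)).const_mul (a i)]
  refine sum_congr rfl fun i _ => ?_
  rw [integral_const_mul, ← integral_pow_mul_rpow_mul_exp hα]
  simp only [mul_assoc]

end Moments

section LaguerreCoeff

variable {α : ℝ}

noncomputable def laguerreCoeff (α : ℝ) (n k : ℕ) : ℝ :=
  (-1) ^ k * genBinom (n + α) (n - k) / k.factorial

lemma laguerre_eq_sum_laguerreCoeff_mul_pow (α : ℝ) (n : ℕ) (x : ℝ) :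
    laguerre α n x = ∑ k ∈ range (n + 1), laguerreCoeff α n k * x ^ k :=
  sum_congr rfl fun k _ => by rw [laguerreCoeff]; ring

lemma laguerreCoeff_self (α : ℝ) (n : ℕ) : laguerreCoeff α n n = (-1) ^ n / n.factorial := by
  simp [laguerreCoeff, genBinom]

lemma laguerreCoeff_mul_Gamma (hα : -1 < α) {n j : ℕ} (hj : j ≤ n) :
    laguerreCoeff α n j * Gamma (j + α + 1)
      = Gamma (n + α + 1) / n.factorial * ((-1) ^ j * n.choose j) := by
  have hbinom := genBinom_mul_Gamma (z := n + α) (d := n - j) fun k => by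
    rw [Nat.cast_sub hj]; linarith [k.cast_nonneg (α := ℝ)]
  rw [Nat.cast_sub hj, show (n : ℝ) + α - (n - j) + 1 = j + α + 1 by ring] at hbinom
  have hfac : (n.factorial : ℝ) = n.choose j * j.factorial * (n - j).factorial := by
    exact_mod_cast (Nat.choose_mul_factorial_mul_factorial hj).symm
  rw [laguerreCoeff, mul_div_right_comm, mul_assoc, hbinom, hfac]
  have hchoose : (n.choose j : ℝ) ≠ 0 := Nat.cast_ne_zero.mpr (Nat.choose_pos hj).ne'
  field_simp

lemma sum_laguerreCoeff_mul_Gamma (hα : -1 < α) {n k : ℕ} (hk : k ≤ n) :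
    ∑ j ∈ range (n + 1), laguerreCoeff α n j * Gamma (j + k + α + 1)
      = if k = n then (-1) ^ n * Gamma (n + α + 1) else 0 := by
  have hterm : ∀ j ∈ range (n + 1), laguerreCoeff α n j * Gamma (j + k + α + 1)
      = Gamma (n + α + 1) / n.factorial *
        ((-1) ^ j * n.choose j * (ascPochhammer ℝ k).eval (α + 1 + j)) := fun j hj => by
    rw [show (j : ℝ) + k + α + 1 = j + α + 1 + k by ring,
      ← Gamma_mul_ascPochhammer_eval (fun i => by linarith [i.cast_nonneg (α := ℝ)]), ← mul_assoc,
      laguerreCoeff_mul_Gamma hα (Nat.lt_succ_iff.mp (mem_range.mp hj))]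
    ring_nf
  rw [sum_congr rfl hterm, ← mul_sum, sum_neg_one_pow_mul_choose_mul_ascPochhammer_eval _ hk]
  split_ifs
  · field_simp
  · simp

lemma integral_laguerre_mul_laguerre (hα : -1 < α) (n m : ℕ) :
    ∫ x in Set.Ioi (0 : ℝ), laguerre α n x * laguerre α m x * x ^ α * exp (-x)
      = ∑ k ∈ range (m + 1), laguerreCoeff α m k *
          ∑ j ∈ range (n + 1), laguerreCoeff α n j * Gamma (j + k + α + 1) := by
  have hprod : ∀ x : ℝ, laguerre α n x * laguerre α m x
      = ∑ p ∈ range (n + 1) ×ˢ range (m + 1),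
          laguerreCoeff α n p.1 * laguerreCoeff α m p.2 * x ^ (p.1 + p.2) := by
    intro x
    rw [laguerre_eq_sum_laguerreCoeff_mul_pow, laguerre_eq_sum_laguerreCoeff_mul_pow, sum_mul_sum,
      sum_product]
    exact sum_congr rfl fun j _ => sum_congr rfl fun k _ => by ring
  simp_rw [hprod]
  rw [integral_sum_pow_mul_rpow_mul_exp hα, sum_product, sum_comm]
  push_cast
  exact sum_congr rfl fun k _ => by rw [mul_sum]; exact sum_congr rfl fun j _ => by ring

lemma integral_laguerre_mul_laguerre_of_le (hα : -1 < α) {n m : ℕ} (hmn : m ≤ n) :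
    ∫ x in Set.Ioi (0 : ℝ), laguerre α n x * laguerre α m x * x ^ α * exp (-x)
      = if m = n then Gamma (n + α + 1) / n.factorial else 0 := by
  rw [integral_laguerre_mul_laguerre hα,
    sum_congr rfl fun k hk => by rw [sum_laguerreCoeff_mul_Gamma hα (by grind)]]
  simp only [mul_ite, mul_zero, sum_ite_eq', mem_range, Nat.lt_succ_iff]
  rcases hmn.eq_or_lt with rfl | hlt
  · rw [if_pos le_rfl, if_pos rfl, laguerreCoeff_self, ← mul_assoc, div_mul_eq_mul_div, ← pow_add,
      Even.neg_one_pow ⟨m, rfl⟩, one_div_mul_eq_div]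
  · rw [if_neg hlt.not_ge, if_neg hlt.ne]

end LaguerreCoeff

/-- Orthogonality of generalized Laguerre polynomials with weight x^α e^{-x} on (0,∞). -/
theorem laguerre_orthogonality (α : ℝ) (hα : -1 < α) (n m : ℕ) :
    (n ≠ m → ∫ x in Set.Ioi (0 : ℝ),
        laguerre α n x * laguerre α m x * x ^ α * Real.exp (-x) = 0) ∧
    (∫ x in Set.Ioi (0 : ℝ),
        laguerre α n x * laguerre α n x * x ^ α * Real.exp (-x))
      = Real.Gamma (n + α + 1) / n.factorial := by
  refine ⟨fun hnm => ?_, by simpa using integral_laguerre_mul_laguerre_of_le hα le_rfl⟩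
  rcases hnm.lt_or_gt with hlt | hgt
  · simp_rw [mul_comm (laguerre α n _) (laguerre α m _)]
    rw [integral_laguerre_mul_laguerre_of_le hα hlt.le, if_neg hlt.ne]
  · rw [integral_laguerre_mul_laguerre_of_le hα hgt.le, if_neg hgt.ne]
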